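/- arXiv:2212.04739 — 5 statements merged into one kernel-verified Lean document; each statement's English description precedes it below -/
import Mathlib

section
/- Let b > 0, μ, ν ∈ ℝ, λ ∈ (1,∞), and let φ_μ denote the Gaussian density with mean μ and standard deviation b. Then the Rényi divergence satisfies the exact identity D_λ(φ_μ, φ_ν) = (1/(λ−1)) · log ∫_ℝ φ_μ(t)^λ φ_ν(t)^{1−λ} dt = λ (μ − ν)² / (2 b²). In particular, for the Gaussian mechanism A(x) = S(x) + Y with Y ~ N(0,b²) and |S(x) − S(x')| = 1, the divergence of the two output densities equals λ/(2b²). -/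
open MeasureTheory

/-- The Gaussian density with mean `μ` and standard deviation `b`. -/
noncomputable def gaussPdf (b μ t : ℝ) : ℝ :=
  (1 / (Real.sqrt (2 * Real.pi) * b)) * Real.exp (-(t - μ) ^ 2 / (2 * b ^ 2))

/-! The geometric mixture `φ_μ^λ φ_ν^(1-λ)` of two Gaussians with a common variance is the
Gaussian with mean `λμ + (1-λ)ν`, rescaled by `exp (λ(λ-1)(μ-ν)²/(2b²))`: the normalising
constants combine to one normalising constant, and completing the square in the exponent gives
`λ(t-μ)² + (1-λ)(t-ν)² = (t - (λμ + (1-λ)ν))² - λ(λ-1)(μ-ν)²`. Integrating, the integral in the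
Rényi divergence is that exponential. -/

lemma gaussPdf_eq_gaussianPDFReal {b : ℝ} (hb : 0 ≤ b) (μ : ℝ) :
    gaussPdf b μ = ProbabilityTheory.gaussianPDFReal μ ⟨b ^ 2, sq_nonneg b⟩ := by
  funext t
  change _ = (√(2 * Real.pi * b ^ 2))⁻¹ * Real.exp (-(t - μ) ^ 2 / (2 * b ^ 2))
  rw [gaussPdf, one_div, Real.sqrt_mul (by positivity) (b ^ 2), Real.sqrt_sq hb]

lemma integral_gaussPdf {b : ℝ} (hb : 0 < b) (μ : ℝ) : ∫ t, gaussPdf b μ t = 1 := by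
  rw [gaussPdf_eq_gaussianPDFReal hb.le]
  refine ProbabilityTheory.integral_gaussianPDFReal_eq_one μ fun h ↦ ?_
  exact (pow_pos hb 2).ne' (congrArg NNReal.toReal h)

lemma gaussPdf_rpow_mul_rpow {b : ℝ} (hb : 0 < b) (μ ν l t : ℝ) :
    gaussPdf b μ t ^ l * gaussPdf b ν t ^ (1 - l)
      = Real.exp (l * (l - 1) * (μ - ν) ^ 2 / (2 * b ^ 2))
        * gaussPdf b (l * μ + (1 - l) * ν) t := by
  have hc : 0 < 1 / (Real.sqrt (2 * Real.pi) * b) := by positivity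
  have hexponent : -(t - μ) ^ 2 / (2 * b ^ 2) * l + -(t - ν) ^ 2 / (2 * b ^ 2) * (1 - l)
      = l * (l - 1) * (μ - ν) ^ 2 / (2 * b ^ 2)
        + -(t - (l * μ + (1 - l) * ν)) ^ 2 / (2 * b ^ 2) := by
    field_simp
    ring
  simp only [gaussPdf]
  rw [Real.mul_rpow hc.le (Real.exp_pos _).le, Real.mul_rpow hc.le (Real.exp_pos _).le,
    ← Real.exp_mul, ← Real.exp_mul, mul_mul_mul_comm, ← Real.rpow_add hc, add_sub_cancel,
    Real.rpow_one, ← Real.exp_add, hexponent, Real.exp_add]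
  ring

lemma integral_gaussPdf_rpow_mul_rpow {b : ℝ} (hb : 0 < b) (μ ν l : ℝ) :
    ∫ t, gaussPdf b μ t ^ l * gaussPdf b ν t ^ (1 - l)
      = Real.exp (l * (l - 1) * (μ - ν) ^ 2 / (2 * b ^ 2)) := by
  simp_rw [gaussPdf_rpow_mul_rpow hb, integral_const_mul, integral_gaussPdf hb, mul_one]

/-- Exact Rényi divergence of order `λ` between two Gaussians with common standard
deviation `b`: `D_λ(φ_μ, φ_ν) = λ (μ - ν)² / (2 b²)`; in particular, for means at
distance `1` (sensitivity-1 Gaussian mechanism) it equals `λ / (2 b²)`. -/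
theorem renyiDiv_gaussian (b μ ν l : ℝ) (hb : 0 < b) (hl : 1 < l) :
    (1 / (l - 1)) *
        Real.log (∫ t : ℝ, gaussPdf b μ t ^ l * gaussPdf b ν t ^ (1 - l))
      = l * (μ - ν) ^ 2 / (2 * b ^ 2) ∧
    (|μ - ν| = 1 →
      (1 / (l - 1)) *
          Real.log (∫ t : ℝ, gaussPdf b μ t ^ l * gaussPdf b ν t ^ (1 - l))
        = l / (2 * b ^ 2)) := by
  have hdiv : (1 / (l - 1)) *
      Real.log (∫ t : ℝ, gaussPdf b μ t ^ l * gaussPdf b ν t ^ (1 - l))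
      = l * (μ - ν) ^ 2 / (2 * b ^ 2) := by
    have hl1 : l - 1 ≠ 0 := by linarith
    rw [integral_gaussPdf_rpow_mul_rpow hb, Real.log_exp]
    field_simp
  refine ⟨hdiv, fun hdist ↦ ?_⟩
  rw [hdiv, ← sq_abs, hdist, one_pow, mul_one]
end

section
/- Let ε₀ ≥ 0, a := exp(ε₀)/(1+exp(ε₀)), λ ∈ (1,∞), and m ≥ 1. For x ∈ {0,1}, let R(x) be the binary randomized response channel that outputs x with probability a and 1−x with probability 1−a. Let p be the probability mass function on {0,1}^m of (R(x_1),…,R(x_m)) with independent randomization for x = (1,0,…,0), and q that for x' = (0,0,…,0). Then D_λ(p,q) = (1/(λ−1)) · log{ a^λ (1−a)^{1−λ} + a^{1−λ} (1−a)^λ }. -/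
open scoped BigOperators

/-- Rényi divergence of binary randomized response applied coordinatewise and independently
to the adjacent databases `x = (1,0,…,0)` and `x' = (0,0,…,0)` in `{0,1}^m`:
`D_λ(p,q) = (1/(λ-1)) log { a^λ (1-a)^{1-λ} + a^{1-λ} (1-a)^λ }`
where `a = exp(ε₀)/(1+exp(ε₀))`. -/
theorem renyiDiv_randomizedResponse (e0 : ℝ) (he0 : 0 ≤ e0) (m : ℕ) (hm : 1 ≤ m)
    (l : ℝ) (hl : 1 < l) :
    let a : ℝ := Real.exp e0 / (1 + Real.exp e0)
    let x : Fin m → Bool := fun i => decide (i.val = 0)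
    let x' : Fin m → Bool := fun _ => false
    let p : (Fin m → Bool) → ℝ := fun y => ∏ i, if y i = x i then a else 1 - a
    let q : (Fin m → Bool) → ℝ := fun y => ∏ i, if y i = x' i then a else 1 - a
    (1 / (l - 1)) * Real.log (∑ y : Fin m → Bool, p y ^ l * q y ^ (1 - l))
      = (1 / (l - 1)) *
          Real.log (a ^ l * (1 - a) ^ (1 - l) + a ^ (1 - l) * (1 - a) ^ l) := by
  intro a x x' p q
  have hexp : 0 < Real.exp e0 := Real.exp_pos e0
  have hden : 0 < 1 + Real.exp e0 := by linarith
  have ha : 0 < a := div_pos hexp hden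
  have ha1 : a < 1 := by
    rw [div_lt_one hden]; linarith
  have ha1' : 0 < 1 - a := by linarith
  congr 1
  -- rewrite the summand as a product over coordinates
  have hsum : (∑ y : Fin m → Bool, p y ^ l * q y ^ (1 - l))
      = ∑ y : Fin m → Bool, ∏ i,
          ((if y i = x i then a else 1 - a) ^ l *
            (if y i = x' i then a else 1 - a) ^ (1 - l)) := by
    refine Finset.sum_congr rfl fun y _ => ?_
    have h1 : p y ^ l = ∏ i, (if y i = x i then a else 1 - a) ^ l := by
      rw [← Real.finset_prod_rpow]
      intro i _; split <;> positivity
    have h2 : q y ^ (1 - l) = ∏ i, (if y i = x' i then a else 1 - a) ^ (1 - l) := by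
      rw [← Real.finset_prod_rpow]
      intro i _; split <;> positivity
    rw [h1, h2, ← Finset.prod_mul_distrib]
  rw [hsum, ← Fintype.prod_sum
    (fun (i : Fin m) (b : Bool) =>
      (if b = x i then a else 1 - a) ^ l * (if b = x' i then a else 1 - a) ^ (1 - l))]
  have key : ∀ i : Fin m,
      (∑ b : Bool, (if b = x i then a else 1 - a) ^ l *
        (if b = x' i then a else 1 - a) ^ (1 - l))
      = if i = (⟨0, hm⟩ : Fin m) then
          (a ^ l * (1 - a) ^ (1 - l) + a ^ (1 - l) * (1 - a) ^ l) else 1 := by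
    intro i
    by_cases hi : i = (⟨0, hm⟩ : Fin m)
    · subst hi
      rw [if_pos rfl]
      have hx : x ⟨0, hm⟩ = true := by simp [x]
      have hx' : x' ⟨0, hm⟩ = false := rfl
      rw [Fintype.sum_bool, hx, hx']
      norm_num
      ring
    · have hx : x i = false := by
        simp only [x, decide_eq_false_iff_not]
        intro h
        exact hi (Fin.ext h)
      have hx' : x' i = false := rfl
      rw [Fintype.sum_bool, if_neg hi, hx, hx']
      norm_num
      rw [← Real.rpow_add ha1', ← Real.rpow_add ha]
      norm_num
  rw [Finset.prod_congr rfl fun i _ => key i]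
  rw [Finset.prod_ite_eq' Finset.univ (⟨0, hm⟩ : Fin m)
    (fun _ => a ^ l * (1 - a) ^ (1 - l) + a ^ (1 - l) * (1 - a) ^ l)]
  simp
end

section
/- (Kernel density estimator variance bound.) Let f be a probability density on ℝ^d, K : ℝ^d → ℝ a measurable function with ∫ K(t)² dt < ∞, h > 0, n ∈ ℕ, and X_1, …, X_n i.i.d. with density f. Define the kernel density estimator f̂(t) := (1/(n h^d)) Σ_{i=1}^n K((t − X_i)/h). Then E ∫ ( f̂(t) − E f̂(t) )² dt ≤ ‖K‖₂² / (n h^d), where ‖K‖₂² = ∫ K(t)² dt. -/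
open MeasureTheory ProbabilityTheory
open scoped ENNReal

/-! For fixed `t` the summands `K (h⁻¹ • (t - X i))` are independent, so the variance of `f̂(t)`
is at most `(n h^d)⁻² ∑ i E[K (h⁻¹ • (t - X i))²]`. Integrating in `t` and exchanging the order of
integration (Tonelli, working in `ℝ≥0∞`), translation and scaling of Lebesgue measure turn each
term into `h^d ‖K‖₂²`. -/

lemma MeasureTheory.ofReal_integral_le_lintegral_ofReal {α : Type*} [MeasurableSpace α]
    {μ : Measure α} {g : α → ℝ} (hg : ∀ x, 0 ≤ g x) :
    ENNReal.ofReal (∫ x, g x ∂μ) ≤ ∫⁻ x, ENNReal.ofReal (g x) ∂μ := by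
  by_cases hgi : Integrable g μ
  · rw [ofReal_integral_eq_lintegral_ofReal hgi (ae_of_all _ hg)]
  · simp [integral_undef hgi]

namespace ProbabilityTheory

variable {Ω : Type*} [MeasurableSpace Ω] {μ : Measure Ω}

lemma evariance_le_lintegral_sq [IsProbabilityMeasure μ] {Y : Ω → ℝ}
    (hY : AEStronglyMeasurable Y μ) :
    evariance Y μ ≤ ∫⁻ ω, ENNReal.ofReal (Y ω ^ 2) ∂μ := by
  simp_rw [evariance_def' hY, ← Real.enorm_of_nonneg (sq_nonneg _), enorm_pow]
  exact tsub_le_self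

lemma IndepFun.evariance_sum_le [IsFiniteMeasure μ] {ι : Type*} {s : Finset ι}
    {Y : ι → Ω → ℝ} (hY : ∀ i ∈ s, AEStronglyMeasurable (Y i) μ)
    (hindep : Set.Pairwise ↑s fun i j => Y i ⟂ᵢ[μ] Y j) :
    evariance (∑ i ∈ s, Y i) μ ≤ ∑ i ∈ s, evariance (Y i) μ := by
  by_cases hL2 : ∀ i ∈ s, MemLp (Y i) 2 μ
  · rw [← (memLp_finsetSum' s hL2).ofReal_variance_eq, IndepFun.variance_sum hL2 hindep,
      ENNReal.ofReal_sum_of_nonneg fun i _ => variance_nonneg _ _]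
    exact (Finset.sum_congr rfl fun i hi => (hL2 i hi).ofReal_variance_eq).le
  · push Not at hL2
    obtain ⟨i, hi, hi_not⟩ := hL2
    rw [ENNReal.sum_eq_top.mpr ⟨i, hi, evariance_eq_top (hY i hi) hi_not⟩]
    exact le_top

lemma iIndepFun.evariance_sum_comp_le [IsProbabilityMeasure μ] {ι β : Type*} [Fintype ι]
    [MeasurableSpace β] {X : ι → Ω → β} (hX : ∀ i, Measurable (X i)) (hindep : iIndepFun X μ)
    {φ : β → ℝ} (hφ : Measurable φ) :
    evariance (fun ω => ∑ i, φ (X i ω)) μ ≤ ∑ i, ∫⁻ ω, ENNReal.ofReal (φ (X i ω) ^ 2) ∂μ := by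
  have hY : ∀ i, AEStronglyMeasurable (fun ω => φ (X i ω)) μ := fun i =>
    (hφ.comp (hX i)).aestronglyMeasurable
  calc evariance (fun ω => ∑ i, φ (X i ω)) μ = evariance (∑ i, fun ω => φ (X i ω)) μ := by
        simp only [← Finset.sum_fn]
    _ ≤ ∑ i, evariance (fun ω => φ (X i ω)) μ :=
        IndepFun.evariance_sum_le (fun i _ => hY i)
          fun i _ j _ hij => (hindep.comp _ fun _ => hφ).indepFun hij
    _ ≤ ∑ i, ∫⁻ ω, ENNReal.ofReal (φ (X i ω) ^ 2) ∂μ :=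
        Finset.sum_le_sum fun i _ => evariance_le_lintegral_sq (hY i)

lemma ofReal_integral_integral_sq_sub_le_lintegral_evariance {α : Type*} [MeasurableSpace α]
    {ν : Measure α} [SFinite ν] [SFinite μ] {Z : α → Ω → ℝ}
    (hZ : Measurable (Function.uncurry Z)) :
    ENNReal.ofReal (∫ ω, ∫ t, (Z t ω - ∫ ω', Z t ω' ∂μ) ^ 2 ∂ν ∂μ)
      ≤ ∫⁻ t, evariance (Z t) μ ∂ν := by
  have hmean : Measurable fun t => ∫ ω', Z t ω' ∂μ :=
    hZ.stronglyMeasurable.integral_prod_right'.measurable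
  have hdev :
      Measurable fun p : α × Ω => ENNReal.ofReal ((Z p.1 p.2 - ∫ ω', Z p.1 ω' ∂μ) ^ 2) :=
    ((hZ.sub (hmean.comp measurable_fst)).pow_const 2).ennreal_ofReal
  calc ENNReal.ofReal (∫ ω, ∫ t, (Z t ω - ∫ ω', Z t ω' ∂μ) ^ 2 ∂ν ∂μ)
      ≤ ∫⁻ ω, ENNReal.ofReal (∫ t, (Z t ω - ∫ ω', Z t ω' ∂μ) ^ 2 ∂ν) ∂μ :=
        ofReal_integral_le_lintegral_ofReal fun ω => integral_nonneg fun t => sq_nonneg _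
    _ ≤ ∫⁻ ω, ∫⁻ t, ENNReal.ofReal ((Z t ω - ∫ ω', Z t ω' ∂μ) ^ 2) ∂ν ∂μ :=
        lintegral_mono fun ω => ofReal_integral_le_lintegral_ofReal fun t => sq_nonneg _
    _ = ∫⁻ t, ∫⁻ ω, ENNReal.ofReal ((Z t ω - ∫ ω', Z t ω' ∂μ) ^ 2) ∂μ ∂ν :=
        lintegral_lintegral_swap (hdev.comp measurable_swap).aemeasurable
    _ = ∫⁻ t, evariance (Z t) μ ∂ν := by simp_rw [evariance_eq_lintegral_ofReal]

end ProbabilityTheory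

section
variable {E : Type*} [NormedAddCommGroup E] [NormedSpace ℝ E] [MeasurableSpace E] [BorelSpace E]
  [FiniteDimensional ℝ E] (μ : Measure E) [μ.IsAddHaarMeasure]

lemma measurable_uncurry_comp_inv_smul_sub {Ω β : Type*} [MeasurableSpace Ω] [MeasurableSpace β]
    {g : E → β} (hg : Measurable g) {X : Ω → E} (hX : Measurable X) (h : ℝ) :
    Measurable (Function.uncurry fun t ω => g (h⁻¹ • (t - X ω))) :=
  hg.comp ((measurable_fst.sub (hX.comp measurable_snd)).const_smul h⁻¹)

lemma lintegral_comp_inv_smul_sub (g : E → ℝ≥0∞) {h : ℝ} (hh : h ≠ 0) (x : E) :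
    ∫⁻ t, g (h⁻¹ • (t - x)) ∂μ = ENNReal.ofReal (|h| ^ Module.finrank ℝ E) * ∫⁻ t, g t ∂μ := by
  have hscale : ∫⁻ t, g t ∂(μ.map (h⁻¹ • ·)) = ∫⁻ t, g (h⁻¹ • t) ∂μ :=
    lintegral_map_equiv g (MeasurableEquiv.smul₀ h⁻¹ (inv_ne_zero hh))
  rw [lintegral_sub_right_eq_self (fun t => g (h⁻¹ • t)) x, ← hscale,
    Measure.map_addHaar_smul μ (inv_ne_zero hh), lintegral_smul_measure, smul_eq_mul, inv_pow,
    inv_inv, abs_pow]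

lemma lintegral_lintegral_comp_inv_smul_sub {Ω : Type*} [MeasurableSpace Ω] (P : Measure Ω)
    [SFinite P] {g : E → ℝ≥0∞} (hg : Measurable g) {X : Ω → E} (hX : Measurable X) {h : ℝ}
    (hh : h ≠ 0) :
    ∫⁻ t, ∫⁻ ω, g (h⁻¹ • (t - X ω)) ∂P ∂μ
      = P Set.univ * (ENNReal.ofReal (|h| ^ Module.finrank ℝ E) * ∫⁻ t, g t ∂μ) := by
  rw [lintegral_lintegral_swap (measurable_uncurry_comp_inv_smul_sub hg hX h).aemeasurable]
  simp_rw [lintegral_comp_inv_smul_sub μ g hh, lintegral_const, mul_comm]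

lemma lintegral_sum_lintegral_comp_inv_smul_sub {Ω ι : Type*} [MeasurableSpace Ω] [Fintype ι]
    (P : Measure Ω) [IsProbabilityMeasure P] {g : E → ℝ≥0∞} (hg : Measurable g)
    {X : ι → Ω → E} (hX : ∀ i, Measurable (X i)) {h : ℝ} (hh : h ≠ 0) :
    ∫⁻ t, ∑ i, ∫⁻ ω, g (h⁻¹ • (t - X i ω)) ∂P ∂μ
      = Fintype.card ι * (ENNReal.ofReal (|h| ^ Module.finrank ℝ E) * ∫⁻ t, g t ∂μ) := by
  rw [lintegral_finsetSum _ fun i _ =>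
    (measurable_uncurry_comp_inv_smul_sub hg (hX i) h).lintegral_prod_right]
  simp_rw [lintegral_lintegral_comp_inv_smul_sub μ P hg (hX _) hh, measure_univ, one_mul,
    Finset.sum_const, Finset.card_univ, nsmul_eq_mul]

end

theorem kde_variance_bound_general (d : ℕ) {Ω : Type*} [MeasurableSpace Ω] (P : Measure Ω)
    [IsProbabilityMeasure P]
    (K : (Fin d → ℝ) → ℝ)
    (hKm : Measurable K) (hK2 : Integrable (fun t => K t ^ 2))
    (h : ℝ) (hh : 0 < h) (n : ℕ)
    (X : Fin n → Ω → (Fin d → ℝ)) (hXm : ∀ i, Measurable (X i))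
    (hindep : iIndepFun X P) :
    (∫ ω, (∫ t, ((1 / (n * h ^ d)) * ∑ i, K (h⁻¹ • (t - X i ω)) -
          ∫ ω', (1 / (n * h ^ d)) * ∑ i, K (h⁻¹ • (t - X i ω')) ∂P) ^ 2) ∂P)
      ≤ (∫ t, K t ^ 2) / (n * h ^ d) := by
  set c : ℝ := 1 / (n * h ^ d)
  have hvar : ∀ t, evariance (fun ω => c * ∑ i, K (h⁻¹ • (t - X i ω))) P
      ≤ ENNReal.ofReal (c ^ 2) * ∑ i, ∫⁻ ω, ENNReal.ofReal (K (h⁻¹ • (t - X i ω)) ^ 2) ∂P := by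
    intro t
    rw [evariance_mul]
    gcongr
    exact hindep.evariance_sum_comp_le (φ := fun x => K (h⁻¹ • (t - x))) hXm
      (hKm.comp ((measurable_const.sub measurable_id).const_smul h⁻¹))
  have hZ : Measurable (Function.uncurry fun t ω => c * ∑ i, K (h⁻¹ • (t - X i ω))) :=
    (Finset.measurable_sum _ fun i _ =>
      measurable_uncurry_comp_inv_smul_sub hKm (hXm i) h).const_mul c
  have hc : c ^ 2 * (n * h ^ d) = c := by
    by_cases h0 : (n : ℝ) * h ^ d = 0
    · simp [c, h0]
    · simp only [c]
      field_simp
  rw [← ENNReal.ofReal_le_ofReal_iff (by positivity)]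
  calc _ ≤ ∫⁻ t, evariance (fun ω => c * ∑ i, K (h⁻¹ • (t - X i ω))) P :=
        ofReal_integral_integral_sq_sub_le_lintegral_evariance hZ
    _ ≤ ∫⁻ t, ENNReal.ofReal (c ^ 2) *
          ∑ i, ∫⁻ ω, ENNReal.ofReal (K (h⁻¹ • (t - X i ω)) ^ 2) ∂P := lintegral_mono hvar
    _ = ENNReal.ofReal (c ^ 2) *
          (n * (ENNReal.ofReal (h ^ d) * ENNReal.ofReal (∫ t, K t ^ 2))) := by
        rw [lintegral_const_mul' _ _ ENNReal.ofReal_ne_top,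
          lintegral_sum_lintegral_comp_inv_smul_sub volume P (hKm.pow_const 2).ennreal_ofReal hXm
            hh.ne', Fintype.card_fin, Module.finrank_fin_fun, abs_of_pos hh,
          ofReal_integral_eq_lintegral_ofReal hK2 (ae_of_all _ fun t => sq_nonneg _)]
    _ = ENNReal.ofReal ((∫ t, K t ^ 2) / (n * h ^ d)) := by
        rw [← ENNReal.ofReal_natCast, ← ENNReal.ofReal_mul (by positivity),
          ← ENNReal.ofReal_mul (by positivity), ← ENNReal.ofReal_mul (by positivity),
          div_eq_mul_one_div]
        congr 1
        linear_combination (∫ t, K t ^ 2) * hc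

/-- Variance bound for the kernel density estimator:
`E ∫ (f̂(t) − E f̂(t))² dt ≤ ‖K‖₂² / (n h^d)`. -/
theorem kde_variance_bound (d : ℕ) {Ω : Type*} [MeasurableSpace Ω] (P : Measure Ω)
    [IsProbabilityMeasure P]
    (f K : (Fin d → ℝ) → ℝ) (hf0 : ∀ t, 0 ≤ f t) (hfm : Measurable f)
    (hf1 : (∫ t, f t) = 1)
    (hKm : Measurable K) (hK2 : Integrable (fun t => K t ^ 2))
    (h : ℝ) (hh : 0 < h) (n : ℕ) (hn : 0 < n)
    (X : Fin n → Ω → (Fin d → ℝ)) (hXm : ∀ i, Measurable (X i))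
    (hindep : iIndepFun X P)
    (hdist : ∀ i, Measure.map (X i) P = volume.withDensity (fun t => ENNReal.ofReal (f t))) :
    (∫ ω, (∫ t, ((1 / (n * h ^ d)) * ∑ i, K (h⁻¹ • (t - X i ω)) -
          ∫ ω', (1 / (n * h ^ d)) * ∑ i, K (h⁻¹ • (t - X i ω')) ∂P) ^ 2) ∂P)
      ≤ (∫ t, K t ^ 2) / (n * h ^ d) :=
  kde_variance_bound_general d P K hKm hK2 h hh n X hXm hindep
end

section
/- (The Laplace density lies in the weak Nikol'ski class N̄(1.5, √2/b²).) Let b > 0 and let g(u) := −sgn(u) · (1/(2b²)) · exp(−|u|/b) be the almost-everywhere (weak) derivative of the Laplace density p(t) = (1/(2b)) exp(−|t|/b). Then for every t ∈ ℝ, [ ∫_ℝ ( g(u+t) − g(u) )² du ]^{1/2} ≤ (√2 / b²) · |t|^{1/2}. -/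
/-!
Write `g` for the weak derivative and take `t ≥ 0` (negative `t` reduce to this by a translation).
Outside `[-t, 0]` the points `u` and `u + t` lie on the same side of the jump of `g`, where
`g(u + t) - g(u)` is `(1 - e^{-t/b})` times the value of `|g|` at the point closer to the origin;
since `(1 - e^{-x})² ≤ x`, these tails contribute at most `t / (2b⁴)`. On `[-t, 0]` the difference is
bounded by `2 sup |g| = 1/b²`, contributing `t/b⁴`. Hence the squared norm is at most `2t/b⁴`.
-/

open MeasureTheory Set

lemma integrable_exp_neg_mul_abs {a : ℝ} (ha : 0 < a) :
    Integrable fun u : ℝ => Real.exp (-a * |u|) := by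
  rw [← integrableOn_univ, ← Iic_union_Ioi (a := (0 : ℝ)), integrableOn_union]
  constructor
  · refine (integrableOn_exp_mul_Iic ha 0).congr_fun (fun u hu => ?_) measurableSet_Iic
    simp [abs_of_nonpos (mem_Iic.mp hu)]
  · refine (integrableOn_exp_mul_Ioi (neg_lt_zero.mpr ha) 0).congr_fun (fun u hu => ?_)
      measurableSet_Ioi
    simp [abs_of_pos (mem_Ioi.mp hu)]

lemma integral_exp_neg_mul_abs {a : ℝ} (ha : 0 < a) :
    ∫ u : ℝ, Real.exp (-a * |u|) = 2 / a := by
  rw [integral_comp_abs (f := fun u => Real.exp (-a * u)),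
    integral_exp_mul_Ioi (neg_lt_zero.mpr ha)]
  field_simp
  simp

lemma integral_sq_sub_comp_add_neg (f : ℝ → ℝ) (t : ℝ) :
    ∫ u, (f (u + -t) - f u) ^ 2 = ∫ u, (f (u + t) - f u) ^ 2 := by
  rw [← integral_add_right_eq_self (fun u => (f (u + -t) - f u) ^ 2) t]
  simp only [add_neg_cancel_right]
  congr 1 with u
  ring

lemma sq_one_sub_exp_neg_le {x : ℝ} (hx : 0 ≤ x) : (1 - Real.exp (-x)) ^ 2 ≤ x := by
  have h1 : Real.exp (-x) ≤ 1 := Real.exp_le_one_iff.mpr (neg_nonpos.mpr hx)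
  have h2 : 1 - x ≤ Real.exp (-x) := by linarith [Real.add_one_le_exp (-x)]
  nlinarith [Real.exp_pos (-x)]

noncomputable def laplaceDeriv (b u : ℝ) : ℝ :=
  -Real.sign u * (1 / (2 * b ^ 2)) * Real.exp (-|u| / b)

section

variable {b : ℝ}

lemma abs_laplaceDeriv_le (hb : 0 ≤ b) (u : ℝ) : |laplaceDeriv b u| ≤ 1 / (2 * b ^ 2) := by
  have hsign : |Real.sign u| ≤ 1 := by
    rcases Real.sign_apply_eq u with h | h | h <;> simp [h]
  have hexp : Real.exp (-|u| / b) ≤ 1 :=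
    Real.exp_le_one_iff.mpr (div_nonpos_of_nonpos_of_nonneg (neg_nonpos.mpr (abs_nonneg u)) hb)
  rw [laplaceDeriv, abs_mul, abs_mul, abs_neg, Real.abs_exp,
    abs_of_nonneg (by positivity : (0 : ℝ) ≤ 1 / (2 * b ^ 2))]
  calc |Real.sign u| * (1 / (2 * b ^ 2)) * Real.exp (-|u| / b)
      ≤ 1 * (1 / (2 * b ^ 2)) * 1 := by gcongr
    _ = 1 / (2 * b ^ 2) := by ring

lemma laplaceDeriv_add_sub_of_pos {t u : ℝ} (hu : 0 < u) (ht : 0 ≤ t) :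
    laplaceDeriv b (u + t) - laplaceDeriv b u =
      1 / (2 * b ^ 2) * (1 - Real.exp (-(t / b))) * Real.exp (-|u| / b) := by
  have hut : 0 < u + t := by linarith
  have hsplit : Real.exp (-|u + t| / b) = Real.exp (-|u| / b) * Real.exp (-(t / b)) := by
    rw [← Real.exp_add, abs_of_pos hu, abs_of_pos hut]; ring_nf
  rw [laplaceDeriv, laplaceDeriv, Real.sign_of_pos hu, Real.sign_of_pos hut, hsplit]
  ring

lemma laplaceDeriv_add_sub_of_add_neg {t u : ℝ} (hut : u + t < 0) (ht : 0 ≤ t) :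
    laplaceDeriv b (u + t) - laplaceDeriv b u =
      1 / (2 * b ^ 2) * (1 - Real.exp (-(t / b))) * Real.exp (-|u + t| / b) := by
  have hu : u < 0 := by linarith
  have hsplit : Real.exp (-|u| / b) = Real.exp (-|u + t| / b) * Real.exp (-(t / b)) := by
    rw [← Real.exp_add, abs_of_neg hu, abs_of_neg hut]; ring_nf
  rw [laplaceDeriv, laplaceDeriv, Real.sign_of_neg hu, Real.sign_of_neg hut, hsplit]
  ring

lemma sq_laplaceDeriv_add_sub_le (hb : 0 < b) {t : ℝ} (ht : 0 ≤ t) (u : ℝ) :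
    (laplaceDeriv b (u + t) - laplaceDeriv b u) ^ 2 ≤
      (1 - Real.exp (-(t / b))) ^ 2 / (4 * b ^ 4) *
          (Real.exp (-(2 / b) * |u|) + Real.exp (-(2 / b) * |u + t|)) +
        (Icc (-t) 0).indicator (fun _ => 1 / b ^ 4) u := by
  have hsq (x : ℝ) : Real.exp (-|x| / b) ^ 2 = Real.exp (-(2 / b) * |x|) := by
    rw [sq, ← Real.exp_add]; ring_nf
  have hexp (x : ℝ) : 0 ≤ Real.exp (-(2 / b) * |x|) := (Real.exp_pos _).le
  rcases lt_or_ge 0 u with hu | hu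
  · rw [laplaceDeriv_add_sub_of_pos hu ht,
      indicator_of_notMem (fun h : u ∈ Icc (-t) 0 => hu.not_ge h.2), add_zero]
    calc _ = (1 - Real.exp (-(t / b))) ^ 2 / (4 * b ^ 4) * Real.exp (-(2 / b) * |u|) := by
          rw [← hsq]; ring
      _ ≤ _ := by gcongr; exact le_add_of_nonneg_right (hexp _)
  rcases lt_or_ge (u + t) 0 with hut | hut
  · rw [laplaceDeriv_add_sub_of_add_neg hut ht,
      indicator_of_notMem (fun h : u ∈ Icc (-t) 0 => hut.not_ge (by linarith [h.1])), add_zero]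
    calc _ = (1 - Real.exp (-(t / b))) ^ 2 / (4 * b ^ 4) * Real.exp (-(2 / b) * |u + t|) := by
          rw [← hsq]; ring
      _ ≤ _ := by gcongr; exact le_add_of_nonneg_left (hexp _)
  · have hdiff : |laplaceDeriv b (u + t) - laplaceDeriv b u| ≤ 1 / b ^ 2 :=
      calc _ ≤ |laplaceDeriv b (u + t)| + |laplaceDeriv b u| := abs_sub _ _
        _ ≤ 1 / (2 * b ^ 2) + 1 / (2 * b ^ 2) :=
          add_le_add (abs_laplaceDeriv_le hb.le _) (abs_laplaceDeriv_le hb.le _)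
        _ = 1 / b ^ 2 := by ring
    rw [indicator_of_mem (show u ∈ Icc (-t) 0 from ⟨by linarith, hu⟩)]
    calc _ ≤ (1 / b ^ 2) ^ 2 := sq_le_sq' (abs_le.mp hdiff).1 (abs_le.mp hdiff).2
      _ = 1 / b ^ 4 := by ring
      _ ≤ _ := le_add_of_nonneg_left (by positivity)

lemma integral_sq_laplaceDeriv_add_sub_le_of_nonneg (hb : 0 < b) {t : ℝ} (ht : 0 ≤ t) :
    ∫ u, (laplaceDeriv b (u + t) - laplaceDeriv b u) ^ 2 ≤ 2 * t / b ^ 4 := by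
  set r := 1 - Real.exp (-(t / b))
  have hE : Integrable fun u : ℝ => Real.exp (-(2 / b) * |u|) :=
    integrable_exp_neg_mul_abs (by positivity)
  have hI : Integrable ((Icc (-t) 0).indicator fun _ : ℝ => 1 / b ^ 4) :=
    (integrableOn_const measure_Icc_lt_top.ne).integrable_indicator measurableSet_Icc
  have hT : Integrable fun u : ℝ =>
      r ^ 2 / (4 * b ^ 4) * (Real.exp (-(2 / b) * |u|) + Real.exp (-(2 / b) * |u + t|)) :=
    (hE.add (hE.comp_add_right t)).const_mul _
  calc ∫ u, (laplaceDeriv b (u + t) - laplaceDeriv b u) ^ 2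
      ≤ ∫ u, (r ^ 2 / (4 * b ^ 4) * (Real.exp (-(2 / b) * |u|) + Real.exp (-(2 / b) * |u + t|)) +
          (Icc (-t) 0).indicator (fun _ => 1 / b ^ 4) u) :=
        integral_mono_of_nonneg (ae_of_all _ fun _ => sq_nonneg _) (hT.add hI)
          (ae_of_all _ (sq_laplaceDeriv_add_sub_le hb ht))
    _ = r ^ 2 / (4 * b ^ 4) * (b + b) + t / b ^ 4 := by
        rw [integral_add hT hI, integral_const_mul,
          integral_add hE (hE.comp_add_right t),
          integral_add_right_eq_self (fun u => Real.exp (-(2 / b) * |u|)),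
          integral_exp_neg_mul_abs (by positivity), integral_indicator_const _ measurableSet_Icc,
          Real.volume_real_Icc_of_le (by linarith), smul_eq_mul]
        field_simp
        ring
    _ ≤ 2 * t / b ^ 4 := by
        have hr : r ^ 2 * b ≤ t := by
          have := sq_one_sub_exp_neg_le (div_nonneg ht hb.le)
          rwa [le_div_iff₀ hb] at this
        calc _ = (r ^ 2 * b / 2 + t) / b ^ 4 := by field_simp; ring
          _ ≤ 2 * t / b ^ 4 := by gcongr; linarith

lemma integral_sq_laplaceDeriv_add_sub_le (hb : 0 < b) (t : ℝ) :
    ∫ u, (laplaceDeriv b (u + t) - laplaceDeriv b u) ^ 2 ≤ 2 * |t| / b ^ 4 := by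
  rcases le_total 0 t with ht | ht
  · rw [abs_of_nonneg ht]
    exact integral_sq_laplaceDeriv_add_sub_le_of_nonneg hb ht
  · rw [abs_of_nonpos ht, ← integral_sq_sub_comp_add_neg]
    exact integral_sq_laplaceDeriv_add_sub_le_of_nonneg hb (neg_nonneg.mpr ht)

end

/-- The weak derivative `g(u) = −sgn(u) (1/(2b²)) exp(−|u|/b)` of the Laplace density
satisfies the Nikol'ski condition of order `1/2`:
`(∫ (g(u+t) − g(u))² du)^{1/2} ≤ (√2 / b²) |t|^{1/2}`, i.e. the Laplace density lies in
the weak Nikol'ski class `N̄(1.5, √2/b²)`. -/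
theorem laplace_weak_nikolski (b : ℝ) (hb : 0 < b) (t : ℝ) :
    Real.sqrt (∫ u : ℝ,
        ((-Real.sign (u + t) * (1 / (2 * b ^ 2)) * Real.exp (-|u + t| / b)) -
          (-Real.sign u * (1 / (2 * b ^ 2)) * Real.exp (-|u| / b))) ^ 2)
      ≤ (Real.sqrt 2 / b ^ 2) * Real.sqrt |t| := by
  rw [Real.sqrt_le_left (by positivity), mul_pow, div_pow, Real.sq_sqrt zero_le_two,
    Real.sq_sqrt (abs_nonneg t), ← pow_mul, div_mul_eq_mul_div]
  exact integral_sq_laplaceDeriv_add_sub_le hb t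
end

section
/- (Exact Rényi divergence of Noisy Gradient Descent on quadratic losses.) Fix m ∈ ℕ, η ∈ (0,1), b > 0, K ∈ ℕ, and λ ∈ (1,∞). For a database x = (x_1,…,x_m) ∈ ℝ^m define the random iteration θ_0 = 0 and θ_{k+1} = θ_k − (η/m) Σ_{i=1}^m (θ_k − x_i) + √(2η) Y_k for k = 0,…,K−1, where Y_0,…,Y_{K−1} are i.i.d. N(0, b²). Let p be the density of θ_K for x = (1,0,…,0) and q that for x' = (0,0,…,0). Then both are Gaussian densities with common variance 2η b² Σ_{k=0}^{K−1} (1−η)^{2k} and means differing by (1/m)(1 − (1−η)^K), and D_λ(p, q) = ( λ / (4 b² m²) ) · ( (2 − η) / (1 + (1−η)^K) ) · ( 1 − (1−η)^K ). -/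
/-!
Since the loss is quadratic, one step of noisy gradient descent is the affine map
`θ ↦ (1 - η) θ + η x̄ + √(2η) Y_k`, so `θ_K` is an affine combination of the independent Gaussians
`Y_k` and is itself Gaussian, with a variance independent of the database. The Rényi divergence
between two Gaussians `N(μ₁, σ²)`, `N(μ₂, σ²)` is `λ (μ₁ - μ₂)² / (2σ²)`: the integrand
`p^λ q^(1-λ)` is a constant multiple of the density of `N(λμ₁ + (1-λ)μ₂, σ²)`. Summing the
geometric series for the mean and the variance gives the closed form.
-/

open MeasureTheory ProbabilityTheory
open scoped BigOperators NNReal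

lemma eq_sum_pow_mul_of_recurrence {R : Type*} [CommSemiring R] {u e : ℕ → R} {r : R}
    (h0 : u 0 = 0) (hstep : ∀ k, u (k + 1) = r * u k + e k) (n : ℕ) :
    u n = ∑ k ∈ Finset.range n, r ^ (n - 1 - k) * e k := by
  induction n with
  | zero => simp [h0]
  | succ n ih =>
    rw [hstep, ih, Finset.sum_range_succ, Finset.mul_sum, Nat.add_sub_cancel, Nat.sub_self,
      pow_zero, one_mul]
    congr 1
    refine Finset.sum_congr rfl fun k hk => ?_
    rw [← mul_assoc, ← pow_succ', show n - k = n - 1 - k + 1 by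
      have := Finset.mem_range.mp hk; omega]

lemma one_sub_sq_mul_sum_pow_two_mul {R : Type*} [CommRing R] (x : R) (n : ℕ) :
    (1 - x ^ 2) * ∑ k ∈ Finset.range n, x ^ (2 * k) = (1 - x ^ n) * (1 + x ^ n) := by
  simp_rw [pow_mul]
  rw [mul_neg_geom_sum, ← pow_mul, pow_mul']
  ring

lemma map_finsetSum_eq_gaussianReal {ι Ω : Type*} [MeasurableSpace Ω] {P : Measure Ω}
    [IsProbabilityMeasure P] {X : ι → Ω → ℝ} (hindep : iIndepFun X P) {μ : ι → ℝ} {v : ι → ℝ≥0}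
    (hX : ∀ i, P.map (X i) = gaussianReal (μ i) (v i)) (s : Finset ι) :
    P.map (∑ i ∈ s, X i) = gaussianReal (∑ i ∈ s, μ i) (∑ i ∈ s, v i) := by
  classical
  have hXm : ∀ i, AEMeasurable (X i) P := fun i =>
    AEMeasurable.of_map_ne_zero (by simp [hX i, NeZero.ne])
  induction s using Finset.induction_on with
  | empty => simp [Pi.zero_def, Measure.map_const, gaussianReal_zero_var]
  | insert i s hi ih =>
    rw [Finset.sum_insert hi, Finset.sum_insert hi, Finset.sum_insert hi, add_comm (X i),
      add_comm (μ i), add_comm (v i)]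
    exact gaussianReal_add_gaussianReal_of_indepFun
      (hindep.indepFun_finsetSum_of_notMem₀ hXm hi) ih (hX i)

lemma map_eq_gaussianReal_of_recurrence {Ω : Type*} [MeasurableSpace Ω] {P : Measure Ω}
    [IsProbabilityMeasure P] {Y : ℕ → Ω → ℝ} (hindep : iIndepFun Y P) {v : ℝ≥0}
    (hY : ∀ k, P.map (Y k) = gaussianReal 0 v) {θ : ℕ → Ω → ℝ} {r d c : ℝ}
    (h0 : ∀ ω, θ 0 ω = 0) (hstep : ∀ k ω, θ (k + 1) ω = r * θ k ω + d + c * Y k ω) (n : ℕ) :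
    P.map (θ n) = gaussianReal (d * ∑ k ∈ Finset.range n, r ^ k)
      (c ^ 2 * v * ∑ k ∈ Finset.range n, r ^ (2 * k)).toNNReal := by
  let g : ℕ → ℝ → ℝ := fun k t => r ^ (n - 1 - k) * (d + c * t)
  have hθ : θ n = ∑ k ∈ Finset.range n, g k ∘ Y k := by
    funext ω
    rw [Finset.sum_apply]
    exact eq_sum_pow_mul_of_recurrence (u := (θ · ω)) (h0 ω)
      (fun k => (hstep k ω).trans (add_assoc _ _ _)) n
  have hlaw : ∀ k, HasLaw (g k ∘ Y k) (gaussianReal (r ^ (n - 1 - k) * d)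
      (.mk ((r ^ (n - 1 - k)) ^ 2) (sq_nonneg _) * (.mk (c ^ 2) (sq_nonneg _) * v))) P := by
    intro k
    have hYk : HasLaw (Y k) (gaussianReal 0 v) P :=
      ⟨AEMeasurable.of_map_ne_zero (by simp [hY k, NeZero.ne]), hY k⟩
    simpa [g, Function.comp_def, add_comm] using gaussianReal_const_mul
      (gaussianReal_const_add (gaussianReal_const_mul hYk c) d) (r ^ (n - 1 - k))
  have hsum_nonneg : 0 ≤ ∑ k ∈ Finset.range n, r ^ (2 * k) :=
    Finset.sum_nonneg fun k _ => by rw [pow_mul]; positivity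
  rw [hθ, map_finsetSum_eq_gaussianReal (hindep.comp g (fun k => by fun_prop))
    (fun k => (hlaw k).map_eq)]
  congr 1
  · rw [← Finset.sum_mul, Finset.sum_range_reflect (r ^ ·) n, mul_comm]
  · ext
    rw [Real.coe_toNNReal _ (by positivity), NNReal.coe_sum, Finset.mul_sum,
      ← Finset.sum_range_reflect (fun k => c ^ 2 * v * r ^ (2 * k)) n]
    refine Finset.sum_congr rfl fun k _ => ?_
    simp only [NNReal.coe_mul, NNReal.coe_mk]
    ring

noncomputable def renyiDivergence (l : ℝ) (p q : ℝ → ℝ) : ℝ :=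
  1 / (l - 1) * Real.log (∫ t, p t ^ l * q t ^ (1 - l))

lemma gaussianPDFReal_rpow_mul_rpow (μ₁ μ₂ l : ℝ) {v : ℝ≥0} (hv : v ≠ 0) (t : ℝ) :
    gaussianPDFReal μ₁ v t ^ l * gaussianPDFReal μ₂ v t ^ (1 - l)
      = Real.exp (l * (l - 1) * (μ₁ - μ₂) ^ 2 / (2 * v))
        * gaussianPDFReal (l * μ₁ + (1 - l) * μ₂) v t := by
  have hv' : (v : ℝ) ≠ 0 := by exact_mod_cast hv
  have hc : 0 < (√(2 * Real.pi * v))⁻¹ := by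
    have : 0 < (v : ℝ) := lt_of_le_of_ne v.2 (Ne.symm hv')
    positivity
  simp only [gaussianPDFReal]
  rw [Real.mul_rpow hc.le (Real.exp_nonneg _), Real.mul_rpow hc.le (Real.exp_nonneg _),
    mul_mul_mul_comm, ← Real.rpow_add hc, add_sub_cancel, Real.rpow_one, ← Real.exp_mul,
    ← Real.exp_mul, ← Real.exp_add, mul_left_comm, ← Real.exp_add]
  congr 2
  field_simp
  ring

lemma integral_gaussianPDFReal_rpow_mul_rpow (μ₁ μ₂ l : ℝ) {v : ℝ≥0} (hv : v ≠ 0) :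
    ∫ t, gaussianPDFReal μ₁ v t ^ l * gaussianPDFReal μ₂ v t ^ (1 - l)
      = Real.exp (l * (l - 1) * (μ₁ - μ₂) ^ 2 / (2 * v)) := by
  simp_rw [gaussianPDFReal_rpow_mul_rpow μ₁ μ₂ l hv]
  rw [integral_const_mul, integral_gaussianPDFReal_eq_one _ hv, mul_one]

lemma renyiDivergence_gaussianPDFReal {l : ℝ} (hl : l ≠ 1) (μ₁ μ₂ : ℝ) {v : ℝ≥0} (hv : v ≠ 0) :
    renyiDivergence l (gaussianPDFReal μ₁ v) (gaussianPDFReal μ₂ v)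
      = l * (μ₁ - μ₂) ^ 2 / (2 * v) := by
  have hl' : l - 1 ≠ 0 := sub_ne_zero.mpr hl
  rw [renyiDivergence, integral_gaussianPDFReal_rpow_mul_rpow μ₁ μ₂ l hv, Real.log_exp]
  field_simp

lemma noisyGD_quadratic_step {m : ℕ} (hm : (m : ℝ) ≠ 0) (η t s : ℝ) (x : Fin m → ℝ) :
    t - η / m * ∑ i, (t - x i) + s = (1 - η) * t + η / m * ∑ i, x i + s := by
  rw [Finset.sum_sub_distrib, Finset.sum_const, Finset.card_univ, Fintype.card_fin, nsmul_eq_mul]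
  field_simp
  ring

lemma map_noisyGD_eq_gaussianReal {Ω : Type*} [MeasurableSpace Ω] {P : Measure Ω}
    [IsProbabilityMeasure P] {Y : ℕ → Ω → ℝ} (hindep : iIndepFun Y P) {b : ℝ}
    (hY : ∀ k, P.map (Y k) = gaussianReal 0 (b ^ 2).toNNReal) {m : ℕ} (hm : (m : ℝ) ≠ 0)
    {η : ℝ} (hη : 0 ≤ η) (x : Fin m → ℝ) {θ : ℕ → Ω → ℝ} (h0 : ∀ ω, θ 0 ω = 0)
    (hstep : ∀ k ω, θ (k + 1) ω
      = θ k ω - (η / m) * (∑ i, (θ k ω - x i)) + Real.sqrt (2 * η) * Y k ω) (n : ℕ) :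
    P.map (θ n) = gaussianReal ((∑ i, x i) / m * (1 - (1 - η) ^ n))
      (2 * η * b ^ 2 * ∑ k ∈ Finset.range n, (1 - η) ^ (2 * k)).toNNReal := by
  rw [map_eq_gaussianReal_of_recurrence hindep hY h0
      (fun k ω => (hstep k ω).trans (noisyGD_quadratic_step hm η _ _ x)),
    Real.sq_sqrt (by positivity), Real.coe_toNNReal _ (sq_nonneg b), ← mul_neg_geom_sum]
  congr 1
  ring

lemma noisyGD_renyiDivergence_closed_form {m K : ℕ} (hm : (m : ℝ) ≠ 0) (hK : K ≠ 0)
    {η b : ℝ} (hη0 : 0 < η) (hη1 : η < 1) (hb : b ≠ 0) (l : ℝ) :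
    l * (1 / m * (1 - (1 - η) ^ K)) ^ 2
        / (2 * (2 * η * b ^ 2 * ∑ k ∈ Finset.range K, (1 - η) ^ (2 * k)))
      = l / (4 * b ^ 2 * m ^ 2) * ((2 - η) / (1 + (1 - η) ^ K)) * (1 - (1 - η) ^ K) := by
  have hrK : (1 - η) ^ K < 1 := pow_lt_one₀ (by linarith) (by linarith) hK
  have hrK0 : 0 < (1 - η) ^ K := pow_pos (by linarith) K
  have h2η : 2 - η ≠ 0 := by linarith
  have h1 : 1 - (1 - η) ^ K ≠ 0 := by linarith
  have h2 : 1 + (1 - η) ^ K ≠ 0 := by linarith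
  have hS : ∑ k ∈ Finset.range K, (1 - η) ^ (2 * k)
      = (1 - (1 - η) ^ K) * (1 + (1 - η) ^ K) / (η * (2 - η)) := by
    rw [← one_sub_sq_mul_sum_pow_two_mul]
    field_simp
    ring
  rw [hS]
  field_simp
  ring

theorem renyiDiv_noisyGD_general (m : ℕ) (hm : 0 < m) (η : ℝ) (hη0 : 0 < η) (hη1 : η < 1)
    (b : ℝ) (hb : 0 < b) (K : ℕ) (hK : 0 < K) (l : ℝ) (hl : 1 < l)
    {Ω : Type*} [MeasurableSpace Ω] (P : Measure Ω) [IsProbabilityMeasure P]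
    (Y : ℕ → Ω → ℝ)
    (hindep : iIndepFun Y P)
    (hgauss : ∀ k, Measure.map (Y k) P = gaussianReal 0 ((b ^ 2).toNNReal))
    (x x' : Fin m → ℝ) (hx : x = fun i => if i.val = 0 then 1 else 0)
    (hx' : x' = fun _ => 0)
    (θ θ' : ℕ → Ω → ℝ) (hθ0 : ∀ ω, θ 0 ω = 0) (hθ'0 : ∀ ω, θ' 0 ω = 0)
    (hθ : ∀ k ω, θ (k + 1) ω
      = θ k ω - (η / m) * (∑ i, (θ k ω - x i)) + Real.sqrt (2 * η) * Y k ω)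
    (hθ' : ∀ k ω, θ' (k + 1) ω
      = θ' k ω - (η / m) * (∑ i, (θ' k ω - x' i)) + Real.sqrt (2 * η) * Y k ω) :
    let σ2 : ℝ := 2 * η * b ^ 2 * ∑ k ∈ Finset.range K, (1 - η) ^ (2 * k)
    let μp : ℝ := (1 / m) * (1 - (1 - η) ^ K)
    let p : ℝ → ℝ := fun t => (1 / Real.sqrt (2 * Real.pi * σ2)) *
      Real.exp (-(t - μp) ^ 2 / (2 * σ2))
    let q : ℝ → ℝ := fun t => (1 / Real.sqrt (2 * Real.pi * σ2)) *
      Real.exp (-(t - 0) ^ 2 / (2 * σ2))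
    Measure.map (θ K) P = volume.withDensity (fun t => ENNReal.ofReal (p t)) ∧
    Measure.map (θ' K) P = volume.withDensity (fun t => ENNReal.ofReal (q t)) ∧
    μp - 0 = (1 / m) * (1 - (1 - η) ^ K) ∧
    (1 / (l - 1)) * Real.log (∫ t : ℝ, p t ^ l * q t ^ (1 - l))
      = (l / (4 * b ^ 2 * m ^ 2)) * ((2 - η) / (1 + (1 - η) ^ K))
        * (1 - (1 - η) ^ K) := by
  intro σ2 μp p q
  have hm' : (m : ℝ) ≠ 0 := by positivity
  have hσ2 : 0 < σ2 := by
    have : 0 < ∑ k ∈ Finset.range K, (1 - η) ^ (2 * k) :=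
      Finset.sum_pos (fun k _ => pow_pos (by linarith) _) ⟨0, Finset.mem_range.mpr hK⟩
    positivity
  have hv : σ2.toNNReal ≠ 0 := by simpa using hσ2
  have hsumx : ∑ i, x i = 1 := by
    simp [hx, Fin.sum_univ_eq_sum_range (fun i => if i = 0 then (1 : ℝ) else 0), hm]
  have hθK := map_noisyGD_eq_gaussianReal hindep hgauss hm' hη0.le x hθ0 hθ K
  have hθ'K := map_noisyGD_eq_gaussianReal hindep hgauss hm' hη0.le x' hθ'0 hθ' K
  rw [hsumx] at hθK
  simp only [hx', Finset.sum_const_zero, zero_div, zero_mul] at hθ'K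
  have hp : p = gaussianPDFReal μp σ2.toNNReal := by
    funext t; simp [p, gaussianPDFReal, Real.coe_toNNReal _ hσ2.le]
  have hq : q = gaussianPDFReal 0 σ2.toNNReal := by
    funext t; simp [q, gaussianPDFReal, Real.coe_toNNReal _ hσ2.le]
  refine ⟨?_, ?_, sub_zero μp, ?_⟩
  · rw [hθK, gaussianReal_of_var_ne_zero _ hv, hp]; rfl
  · rw [hθ'K, gaussianReal_of_var_ne_zero _ hv, hq]; rfl
  · change renyiDivergence l p q = _
    rw [hp, hq, renyiDivergence_gaussianPDFReal hl.ne' _ _ hv, Real.coe_toNNReal _ hσ2.le,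
      sub_zero]
    exact noisyGD_renyiDivergence_closed_form hm' hK.ne' hη0 hη1 hb.ne' l

/-- Exact Rényi divergence of Noisy Gradient Descent on the quadratic ERM problem
`ℓ(θ, x_i) = ½(θ − x_i)²` with `Θ = ℝ`, `θ_0 = 0`, learning rate `η` and i.i.d. noise
`Y_k ~ N(0, b²)`: for the adjacent databases `x = (1,0,…,0)` and `x' = (0,0,…,0)`, the
outputs `θ_K` and `θ'_K` have Gaussian densities `p`, `q` with common variance
`2ηb² Σ_{k<K} (1−η)^{2k}` and means differing by `(1/m)(1 − (1−η)^K)`, and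
`D_λ(p,q) = (λ/(4b²m²)) · ((2−η)/(1+(1−η)^K)) · (1 − (1−η)^K)`. -/
theorem renyiDiv_noisyGD (m : ℕ) (hm : 0 < m) (η : ℝ) (hη0 : 0 < η) (hη1 : η < 1)
    (b : ℝ) (hb : 0 < b) (K : ℕ) (hK : 0 < K) (l : ℝ) (hl : 1 < l)
    {Ω : Type*} [MeasurableSpace Ω] (P : Measure Ω) [IsProbabilityMeasure P]
    (Y : ℕ → Ω → ℝ) (hYm : ∀ k, Measurable (Y k))
    (hindep : iIndepFun Y P)
    (hgauss : ∀ k, Measure.map (Y k) P = gaussianReal 0 ((b ^ 2).toNNReal))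
    (x x' : Fin m → ℝ) (hx : x = fun i => if i.val = 0 then 1 else 0)
    (hx' : x' = fun _ => 0)
    (θ θ' : ℕ → Ω → ℝ) (hθ0 : ∀ ω, θ 0 ω = 0) (hθ'0 : ∀ ω, θ' 0 ω = 0)
    (hθ : ∀ k ω, θ (k + 1) ω
      = θ k ω - (η / m) * (∑ i, (θ k ω - x i)) + Real.sqrt (2 * η) * Y k ω)
    (hθ' : ∀ k ω, θ' (k + 1) ω
      = θ' k ω - (η / m) * (∑ i, (θ' k ω - x' i)) + Real.sqrt (2 * η) * Y k ω) :
    let σ2 : ℝ := 2 * η * b ^ 2 * ∑ k ∈ Finset.range K, (1 - η) ^ (2 * k)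
    let μp : ℝ := (1 / m) * (1 - (1 - η) ^ K)
    let p : ℝ → ℝ := fun t => (1 / Real.sqrt (2 * Real.pi * σ2)) *
      Real.exp (-(t - μp) ^ 2 / (2 * σ2))
    let q : ℝ → ℝ := fun t => (1 / Real.sqrt (2 * Real.pi * σ2)) *
      Real.exp (-(t - 0) ^ 2 / (2 * σ2))
    Measure.map (θ K) P = volume.withDensity (fun t => ENNReal.ofReal (p t)) ∧
    Measure.map (θ' K) P = volume.withDensity (fun t => ENNReal.ofReal (q t)) ∧
    μp - 0 = (1 / m) * (1 - (1 - η) ^ K) ∧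
    (1 / (l - 1)) * Real.log (∫ t : ℝ, p t ^ l * q t ^ (1 - l))
      = (l / (4 * b ^ 2 * m ^ 2)) * ((2 - η) / (1 + (1 - η) ^ K))
        * (1 - (1 - η) ^ K) :=
  renyiDiv_noisyGD_general m hm η hη0 hη1 b hb K hK l hl P Y hindep hgauss x x' hx hx' θ θ' hθ0 hθ'0
    hθ hθ'
end
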